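/- For all natural numbers n, m and every real number x: B_{s,q}[n+m; x] = Σ_{r=0}^{n} Σ_{j=0}^{m} S_{s,q}[m,j] · q^{r(j(1−s)+sm)} · binom(n,r)_{q^s} · B_{s,q}[r; x] · x^j · Π_{i=0}^{n−r−1} [j(1−s) + sm + s·i]_q. (Generalized Spivey formula for Bell polynomials.) -/

import Mathlib

/-- The `q`-bracket `[t]_q = (q^t - 1)/(q - 1)` (real exponentiation). -/
noncomputable def qBracket (q t : ℝ) : ℝ := (q ^ t - 1) / (q - 1)

open Classical in
/-- The `Q`-binomial coefficient: the sum of `Q^(t₁+⋯+t_{n-k})` over all weakly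
increasing integer tuples `0 ≤ t₁ ≤ ⋯ ≤ t_{n-k} ≤ k` when `k ≤ n`, and `0` when `k > n`. -/
noncomputable def qBinom (Q : ℝ) (n k : ℕ) : ℝ :=
  if k ≤ n then
    ∑ f ∈ Finset.univ.filter (fun f : Fin (n - k) → Fin (k + 1) => Monotone f),
      Q ^ (∑ i, (f i : ℕ))
  else 0

/-- The generalized `q`-Stirling numbers `S_{s,q}[n,k]` of Goldman–Haglund type. -/
noncomputable def genStirling (s q : ℝ) : ℕ → ℕ → ℝ
  | 0, 0 => 1
  | 0, _ + 1 => 0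
  | _ + 1, 0 => 0
  | n + 1, k + 1 =>
    if k + 1 ≤ n + 1 then
      q ^ (s * (n : ℝ) - (s - 1) * (k : ℝ)) * genStirling s q n k
        + qBracket q (s * (n : ℝ) - (s - 1) * ((k : ℝ) + 1)) * genStirling s q n (k + 1)
    else 0

/-- The generalized Bell polynomial `B_{s,q}[n;x]`. -/
noncomputable def genBellPoly (s q : ℝ) (n : ℕ) (x : ℝ) : ℝ :=
  ∑ k ∈ Finset.range (n + 1), genStirling s q n k * x ^ k

/-!
The recurrence of `S_{s,q}` says `B_{s,q}[N+1; ·] = T_{sN} B_{s,q}[N; ·]` for the linear operator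
`T_c f(x) = q^c x f(q^{1-s} x) + (q^c f(q^{1-s} x) - f(x))/(q - 1)` (`bellStep s q c`).
Hence `B_{s,q}[n+m; ·]` is `T_{s(n+m-1)} ⋯ T_{sm}` applied to
`B_{s,q}[m; x] = Σ_j S_{s,q}[m,j] x^j`.
Two commutation rules do the rest: `T_c (f · x^j) = (T_{c+j(1-s)} f) · x^j` pulls each monomial
out, and `T_a = q^{a-b} T_b + [a-b]_q` turns `T_{c+sn} B[r]` into
`q^{c+s(n-r)} B[r+1] + [c+s(n-r)]_q B[r]`. So with `c = j(1-s) + sm` the coefficient of `B[r]`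
after `n` steps obeys the `q^s`-Pascal recurrence solved by
`q^{rc} binom(n,r)_{q^s} Π_{i<n-r} [c+si]_q`.
-/

open Finset

lemma sum_range_succ_shift_of_last_eq_zero {M : Type*} [AddCommMonoid M] (g : ℕ → M) (n : ℕ)
    (h : g (n + 1) = 0) :
    ∑ r ∈ range (n + 1), g (r + 1) + g 0 = ∑ r ∈ range (n + 1), g r := by
  rw [← sum_range_succ', sum_range_succ, h, add_zero]

section QBinom

lemma Fin.monotone_cons_zero {a b : ℕ} {g : Fin a → Fin (b + 1)} :
    Monotone (Fin.cons 0 g : Fin (a + 1) → Fin (b + 1)) ↔ Monotone g := by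
  simpa [monotone_iff_forall_lt, Relator.LiftFun] using
    Fin.liftFun_cons (· ≤ ·) (f := g) (a := (0 : Fin (b + 1)))

open Classical in
noncomputable def monotoneTupleSum (Q : ℝ) (a b : ℕ) : ℝ :=
  ∑ f ∈ univ.filter (fun f : Fin a → Fin (b + 1) => Monotone f), Q ^ (∑ i, (f i : ℕ))

variable (Q : ℝ)

lemma monotoneTupleSum_zero_left (b : ℕ) : monotoneTupleSum Q 0 b = 1 := by
  simp [monotoneTupleSum, Subsingleton.monotone]

lemma monotoneTupleSum_zero_right (a : ℕ) : monotoneTupleSum Q a 0 = 1 := by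
  have : ∀ f : Fin a → Fin 1, Monotone f := fun f i j _ => (Subsingleton.elim (f i) (f j)).le
  simp [monotoneTupleSum, this]

lemma sum_monotone_tuples_head_eq_zero (a b : ℕ) :
    ∑ f ∈ (univ.filter fun f : Fin (a + 1) → Fin (b + 2) => Monotone f).filter (· 0 = 0),
      Q ^ (∑ i, (f i : ℕ)) = monotoneTupleSum Q a (b + 1) := by
  refine sum_nbij' Fin.tail
    (fun g : Fin a → Fin (b + 2) => (Fin.cons 0 g : Fin (a + 1) → Fin (b + 2))) ?_ ?_ ?_ ?_ ?_
  · simp only [mem_filter, mem_univ, true_and, and_imp]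
    exact fun f hf _ => hf.comp (Fin.strictMono_succ.monotone)
  · simp only [mem_filter, mem_univ, true_and]
    exact fun g hg => ⟨Fin.monotone_cons_zero.2 hg, rfl⟩
  · simp only [mem_filter, mem_univ, true_and, and_imp]
    intro f _ hf0
    rw [← hf0, Fin.cons_self_tail]
  · exact fun g _ => Fin.tail_cons _ _
  · simp only [mem_filter, mem_univ, true_and, and_imp]
    intro f _ hf0
    simp [Fin.sum_univ_succ, hf0, Fin.tail]

lemma sum_monotone_tuples_head_ne_zero (a b : ℕ) :
    ∑ f ∈ (univ.filter fun f : Fin (a + 1) → Fin (b + 2) => Monotone f).filter (¬ · 0 = 0),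
      Q ^ (∑ i, (f i : ℕ)) = Q ^ (a + 1) * monotoneTupleSum Q (a + 1) b := by
  rw [monotoneTupleSum, mul_sum]
  symm
  refine sum_nbij' (Fin.succ ∘ ·) (fun f k => Fin.predAbove 0 (f k)) ?_ ?_ ?_ ?_ ?_
  · simp only [mem_filter, mem_univ, true_and]
    exact fun g hg => ⟨Fin.strictMono_succ.monotone.comp hg, Fin.succ_ne_zero _⟩
  · simp only [mem_filter, mem_univ, true_and, and_imp]
    exact fun f hf _ => (Fin.predAbove_right_monotone 0).comp hf
  · exact fun g _ => funext fun k => Fin.predAbove_zero_succ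
  · simp only [mem_filter, mem_univ, true_and, and_imp]
    intro f hf hf0
    funext k
    exact Fin.succ_predAbove_zero fun hk => hf0 (Fin.le_zero_iff.1 (hk ▸ hf (Fin.zero_le k)))
  · intro g _
    simp [sum_add_distrib, pow_add, mul_comm]

lemma monotoneTupleSum_succ_succ (a b : ℕ) :
    monotoneTupleSum Q (a + 1) (b + 1)
      = Q ^ (a + 1) * monotoneTupleSum Q (a + 1) b + monotoneTupleSum Q a (b + 1) := by
  rw [monotoneTupleSum, ← sum_filter_not_add_sum_filter _ (· 0 = 0),
    sum_monotone_tuples_head_ne_zero, sum_monotone_tuples_head_eq_zero]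

lemma qBinom_of_le {n k : ℕ} (h : k ≤ n) : qBinom Q n k = monotoneTupleSum Q (n - k) k := by
  rw [qBinom, if_pos h, monotoneTupleSum]

lemma qBinom_of_lt {n k : ℕ} (h : n < k) : qBinom Q n k = 0 := by
  rw [qBinom, if_neg h.not_ge]

lemma qBinom_zero_right (n : ℕ) : qBinom Q n 0 = 1 := by
  rw [qBinom_of_le Q n.zero_le, monotoneTupleSum_zero_right]

lemma qBinom_self (n : ℕ) : qBinom Q n n = 1 := by
  rw [qBinom_of_le Q le_rfl, Nat.sub_self, monotoneTupleSum_zero_left]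

lemma qBinom_succ_succ (n r : ℕ) :
    qBinom Q (n + 1) (r + 1) = Q ^ (n - r) * qBinom Q n r + qBinom Q n (r + 1) := by
  rcases lt_trichotomy r n with h | rfl | h
  · obtain ⟨d, rfl⟩ := Nat.exists_eq_add_of_lt h
    rw [qBinom_of_le Q (by omega), qBinom_of_le Q (by omega), qBinom_of_le Q (by omega),
      show r + d + 1 + 1 - (r + 1) = d + 1 by omega, show r + d + 1 - r = d + 1 by omega,
      show r + d + 1 - (r + 1) = d by omega, monotoneTupleSum_succ_succ]
  · simp [qBinom_self, qBinom_of_lt]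
  · simp [qBinom_of_lt, h, Nat.lt_succ_of_lt h]

end QBinom

lemma qBracket_zero (q : ℝ) : qBracket q 0 = 0 := by
  simp [qBracket]

section Stirling

variable (s q : ℝ)

lemma genStirling_of_lt {n k : ℕ} (h : n < k) : genStirling s q n k = 0 := by
  obtain ⟨k, rfl⟩ := Nat.exists_eq_add_one_of_ne_zero (Nat.ne_zero_of_lt h)
  cases n with
  | zero => rfl
  | succ n => rw [genStirling, if_neg h.not_ge]

lemma genStirling_succ_succ (n k : ℕ) :
    genStirling s q (n + 1) (k + 1)
      = q ^ (s * n - (s - 1) * k) * genStirling s q n k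
        + qBracket q (s * n - (s - 1) * (k + 1)) * genStirling s q n (k + 1) := by
  by_cases h : k ≤ n
  · rw [genStirling, if_pos (by omega)]
  · rw [genStirling, if_neg (by omega), genStirling_of_lt s q (by omega),
      genStirling_of_lt s q (by omega), mul_zero, mul_zero, add_zero]

lemma genStirling_succ_zero (n : ℕ) : genStirling s q (n + 1) 0 = 0 :=
  rfl

end Stirling

noncomputable def bellStep (s q c : ℝ) : (ℝ → ℝ) →ₗ[ℝ] ℝ → ℝ where
  toFun f x := q ^ c * x * f (q ^ (1 - s) * x) + (q ^ c * f (q ^ (1 - s) * x) - f x) / (q - 1)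
  map_add' f g := by ext x; simp only [Pi.add_apply]; ring
  map_smul' a f := by ext x; simp only [Pi.smul_apply, smul_eq_mul, RingHom.id_apply]; ring

section BellStep

variable {s q : ℝ}

lemma bellStep_apply (c : ℝ) (f : ℝ → ℝ) (x : ℝ) :
    bellStep s q c f x
      = q ^ c * x * f (q ^ (1 - s) * x) + (q ^ c * f (q ^ (1 - s) * x) - f x) / (q - 1) :=
  rfl

lemma bellStep_eq_smul_add (hq : 0 < q) (a b : ℝ) (f : ℝ → ℝ) :
    bellStep s q a f = q ^ (a - b) • bellStep s q b f + qBracket q (a - b) • f := by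
  ext x
  simp only [Pi.add_apply, Pi.smul_apply, smul_eq_mul, bellStep_apply, qBracket]
  rw [show a = (a - b) + b by ring, Real.rpow_add hq, add_sub_cancel_right]
  ring

lemma bellStep_mul_pow (hq : 0 < q) (c : ℝ) (f : ℝ → ℝ) (j : ℕ) :
    bellStep s q c (f * fun x => x ^ j) = bellStep s q (c + j * (1 - s)) f * fun x => x ^ j := by
  ext x
  simp only [Pi.mul_apply, bellStep_apply]
  rw [mul_pow, ← Real.rpow_natCast (q ^ (1 - s)), ← Real.rpow_mul hq.le, Real.rpow_add hq,
    mul_comm (1 - s)]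
  ring

lemma bellStep_pow (hq : 0 < q) (c : ℝ) (k : ℕ) :
    bellStep s q c (fun x => x ^ k)
      = fun x => (q ^ (c + k * (1 - s)) * x + qBracket q (c + k * (1 - s))) * x ^ k := by
  ext x
  simpa [bellStep_apply, qBracket] using congrFun (bellStep_mul_pow (s := s) hq c 1 k) x

end BellStep

lemma genBellPoly_eq_sum_smul_pow (s q : ℝ) (n : ℕ) :
    genBellPoly s q n = ∑ k ∈ range (n + 1), genStirling s q n k • fun x => x ^ k := by
  ext x
  simp [genBellPoly, Finset.sum_apply]

lemma genBellPoly_zero (s q : ℝ) : genBellPoly s q 0 = 1 := by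
  ext x
  simp [genBellPoly, genStirling]

lemma genBellPoly_succ {s q : ℝ} (hq : 0 < q) (n : ℕ) :
    genBellPoly s q (n + 1) = bellStep s q (s * n) (genBellPoly s q n) := by
  set g : ℕ → ℝ → ℝ :=
    fun k x => genStirling s q n k * (qBracket q (s * n + k * (1 - s)) * x ^ k)
  have hg_last : g (n + 1) = 0 := by ext x; simp [g, genStirling_of_lt]
  have hg_zero : g 0 = 0 := by
    ext x; rcases n with _ | n <;> simp [g, qBracket_zero, genStirling_succ_zero]
  ext x
  rw [genBellPoly_eq_sum_smul_pow s q n, map_sum]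
  simp only [map_smul, bellStep_pow hq, Finset.sum_apply, Pi.smul_apply, smul_eq_mul, add_mul,
    mul_add, sum_add_distrib]
  rw [genBellPoly, sum_range_succ', genStirling_succ_zero, zero_mul, add_zero]
  simp only [genStirling_succ_succ, add_mul, sum_add_distrib]
  congr 1
  · refine sum_congr rfl fun k _ => ?_
    rw [show s * n - (s - 1) * k = s * n + k * (1 - s) by ring, pow_succ]
    ring
  · have := congrFun (sum_range_succ_shift_of_last_eq_zero g n hg_last) x
    simp only [hg_zero, add_zero, Finset.sum_apply, g] at this
    rw [← this]
    refine sum_congr rfl fun k _ => ?_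
    rw [show s * n - (s - 1) * (k + 1) = s * n + ((k + 1 : ℕ) : ℝ) * (1 - s) by push_cast; ring]
    ring

noncomputable def spiveyCoeff (s q c : ℝ) (n r : ℕ) : ℝ :=
  q ^ ((r : ℝ) * c) * qBinom (q ^ s) n r * ∏ i ∈ range (n - r), qBracket q (c + s * i)

section SpiveyCoeff

variable {s q : ℝ} (c : ℝ)

lemma spiveyCoeff_of_lt {n r : ℕ} (h : n < r) : spiveyCoeff s q c n r = 0 := by
  rw [spiveyCoeff, qBinom_of_lt _ h, mul_zero, zero_mul]

lemma spiveyCoeff_succ_zero (n : ℕ) :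
    spiveyCoeff s q c (n + 1) 0 = qBracket q (c + s * n) * spiveyCoeff s q c n 0 := by
  simp only [spiveyCoeff, qBinom_zero_right, Nat.sub_zero, prod_range_succ]
  ring

lemma spiveyCoeff_succ_succ (hq : 0 < q) (n r : ℕ) :
    spiveyCoeff s q c (n + 1) (r + 1)
      = q ^ (c + s * ((n : ℝ) - r)) * spiveyCoeff s q c n r
        + qBracket q (c + s * ((n : ℝ) - (r + 1))) * spiveyCoeff s q c n (r + 1) := by
  rcases lt_or_ge n r with h | h
  · rw [spiveyCoeff_of_lt c (by omega), spiveyCoeff_of_lt c h, spiveyCoeff_of_lt c (by omega)]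
    ring
  obtain ⟨d, rfl⟩ := Nat.exists_eq_add_of_le h
  have hpow : (q ^ s) ^ d = q ^ (s * ((r + d : ℕ) - r : ℝ)) := by
    rw [← Real.rpow_natCast, ← Real.rpow_mul hq.le]; push_cast; ring_nf
  have hexp : ((r + 1 : ℕ) : ℝ) * c = r * c + c := by push_cast; ring
  simp only [spiveyCoeff, qBinom_succ_succ, show r + d + 1 - (r + 1) = d by omega,
    show r + d - r = d by omega, hpow, hexp, Real.rpow_add hq]
  rcases d with _ | e
  · rw [add_zero, qBinom_of_lt _ r.lt_succ_self]
    ring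
  · rw [show r + (e + 1) - (r + 1) = e by omega, prod_range_succ (n := e)]
    rw [show c + s * ((r + (e + 1) : ℕ) - (r + 1) : ℝ) = c + s * e by push_cast; ring]
    ring

end SpiveyCoeff

lemma bellStep_sum_spiveyCoeff {s q : ℝ} (hq : 0 < q) {B : ℕ → ℝ → ℝ}
    (hB : ∀ r : ℕ, B (r + 1) = bellStep s q (s * r) (B r)) (c : ℝ) (n : ℕ) :
    bellStep s q (c + s * n) (∑ r ∈ range (n + 1), spiveyCoeff s q c n r • B r)
      = ∑ r ∈ range (n + 2), spiveyCoeff s q c (n + 1) r • B r := by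
  have hstep (r : ℕ) : bellStep s q (c + s * n) (B r)
      = q ^ (c + s * ((n : ℝ) - r)) • B (r + 1)
        + qBracket q (c + s * ((n : ℝ) - r)) • B r := by
    rw [hB, bellStep_eq_smul_add hq _ (s * r),
      show c + s * n - s * r = c + s * ((n : ℝ) - r) by ring]
  set g : ℕ → ℝ → ℝ :=
    fun r => (spiveyCoeff s q c n r * qBracket q (c + s * ((n : ℝ) - r))) • B r
  have hg_last : g (n + 1) = 0 := by simp [g, spiveyCoeff_of_lt]
  rw [map_sum, sum_range_succ' _ (n + 1), spiveyCoeff_succ_zero]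
  simp only [map_smul, hstep, smul_add, smul_smul, sum_add_distrib, spiveyCoeff_succ_succ c hq,
    add_smul]
  rw [add_assoc]
  congr 1
  · exact sum_congr rfl fun r _ => by rw [mul_comm]
  · rw [← sum_range_succ_shift_of_last_eq_zero g n hg_last]
    simp only [g, Nat.cast_add, Nat.cast_one, Nat.cast_zero, sub_zero, mul_comm, add_comm]

lemma genBellPoly_add {s q : ℝ} (hq : 0 < q) (n m : ℕ) :
    genBellPoly s q (n + m) = ∑ j ∈ range (m + 1), genStirling s q m j •
      ((∑ r ∈ range (n + 1), spiveyCoeff s q (j * (1 - s) + s * m) n r • genBellPoly s q r)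
        * fun x => x ^ j) := by
  induction n with
  | zero =>
    simp [spiveyCoeff, qBinom_zero_right, genBellPoly_zero, genBellPoly_eq_sum_smul_pow s q m]
  | succ n ih =>
    rw [show n + 1 + m = n + m + 1 by omega, genBellPoly_succ hq, ih, map_sum]
    refine sum_congr rfl fun j _ => ?_
    rw [map_smul, bellStep_mul_pow hq,
      show s * ((n + m : ℕ) : ℝ) + j * (1 - s) = j * (1 - s) + s * m + s * n by push_cast; ring,
      bellStep_sum_spiveyCoeff hq (genBellPoly_succ hq)]

theorem spivey_bell_poly_general (q s : ℝ) (hq : 0 < q) (n m : ℕ) (x : ℝ) :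
    genBellPoly s q (n + m) x
    = ∑ r ∈ Finset.range (n + 1), ∑ j ∈ Finset.range (m + 1),
        genStirling s q m j * q ^ ((r : ℝ) * ((j : ℝ) * (1 - s) + s * (m : ℝ))) *
          qBinom (q ^ s) n r * genBellPoly s q r x * x ^ j *
          ∏ i ∈ Finset.range (n - r),
            qBracket q ((j : ℝ) * (1 - s) + s * (m : ℝ) + s * (i : ℝ)) := by
  rw [genBellPoly_add hq, sum_comm]
  simp only [Finset.sum_apply, Pi.smul_apply, Pi.mul_apply, smul_eq_mul, spiveyCoeff, sum_mul,
    mul_sum]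
  refine sum_congr rfl fun r _ => sum_congr rfl fun j _ => ?_
  ring

/-- Generalized Spivey formula for Bell polynomials. -/
theorem spivey_bell_poly (q s : ℝ) (hq : 0 < q) (hq1 : q ≠ 1) (n m : ℕ) (x : ℝ) :
    genBellPoly s q (n + m) x
    = ∑ r ∈ Finset.range (n + 1), ∑ j ∈ Finset.range (m + 1),
        genStirling s q m j * q ^ ((r : ℝ) * ((j : ℝ) * (1 - s) + s * (m : ℝ))) *
          qBinom (q ^ s) n r * genBellPoly s q r x * x ^ j *
          ∏ i ∈ Finset.range (n - r),
            qBracket q ((j : ℝ) * (1 - s) + s * (m : ℝ) + s * (i : ℝ)) :=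
  spivey_bell_poly_general q s hq n m x
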